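/- Let n > 2, let t ∈ {1,…,n}, let p_t, q_t ∈ (0,1). For each k ≠ t define p^(k) ∈ ℝ^n by p^(k)_t = p_t, p^(k)_k = 1 − p_t, p^(k)_i = 0 otherwise, and define q* ∈ ℝ^n by q*_t = q_t, q*_i = (1−q_t)/(n−1) for i ≠ t. Then the pair (s_P*, s_Q*), where s_P* is the uniform mixed strategy over {p^(k) : k ≠ t} and s_Q* is the pure strategy q*, is a Nash equilibrium of the zero-sum game with payoff D_CE to the adversary: (i) for every q ∈ A_Q, (1/(n−1)) Σ_{k≠t} D_CE(p^(k)‖q) ≥ (1/(n−1)) Σ_{k≠t} D_CE(p^(k)‖q*), and (ii) for every p in the adversary's action set, D_CE(p‖q*) ≤ (1/(n−1)) Σ_{k≠t} D_CE(p^(k)‖q*). -/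

import Mathlib

/-!
Averaged over the adversary's strategies `p^(k)`, the loss of a model `q` is
`-(p_t log q_t + (1 - p_t) · mean_{k ≠ t} log q_k)`, and by concavity of `log` the mean of
`log q_k` under the constraint `∑_{k ≠ t} q_k = 1 - q_t` is largest when all these `q_k` are
equal, i.e. at `q*`. Conversely `q*` is constant off `t`, so `D_CE(p‖q*)` only sees `p_t` and
`∑_{k ≠ t} p_k = 1 - p_t`: every admissible `p` has the same loss against `q*`.
-/

open Finset

/-- Cross entropy `D_CE(p‖q) = -∑ i, p i * log (q i)` (with the convention `0 * log x = 0`,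
which holds automatically for real multiplication). -/
noncomputable def DCE {n : ℕ} (p q : Fin n → ℝ) : ℝ :=
  -∑ i, p i * Real.log (q i)

/-- The minimum of `q` over the non-target coordinates `i ≠ t`. -/
noncomputable def minNT {n : ℕ} (hn : 2 < n) (t : Fin n) (q : Fin n → ℝ) : ℝ :=
  (Finset.univ.erase t).inf'
    (by
      obtain ⟨b, hb⟩ := Fintype.exists_ne_of_one_lt_card
        (by rw [Fintype.card_fin]; omega) t
      exact ⟨b, Finset.mem_erase.mpr ⟨hb, Finset.mem_univ b⟩⟩)
    q

theorem Finset.sum_log_le_card_mul_log_mean {ι : Type*} {s : Finset ι} (hs : s.Nonempty)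
    {f : ι → ℝ} (hf : ∀ i ∈ s, 0 < f i) :
    ∑ i ∈ s, Real.log (f i) ≤ #s * Real.log ((∑ i ∈ s, f i) / #s) := by
  set c := (∑ i ∈ s, f i) / #s
  have hcard : (0 : ℝ) < #s := by exact_mod_cast hs.card_pos
  have hc : 0 < c := div_pos (sum_pos hf hs) hcard
  have tangent : ∀ i ∈ s, Real.log (f i) ≤ Real.log c + (f i / c - 1) := fun i hi => by
    have := Real.log_le_sub_one_of_pos (div_pos (hf i hi) hc)
    rw [Real.log_div (hf i hi).ne' hc.ne'] at this
    linarith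
  calc ∑ i ∈ s, Real.log (f i) ≤ ∑ i ∈ s, (Real.log c + (f i / c - 1)) := sum_le_sum tangent
    _ = #s * Real.log c := by
      have hsum : ∑ i ∈ s, f i = #s * c := by simp only [c]; field_simp
      rw [sum_add_distrib, sum_sub_distrib, ← sum_div, hsum, mul_div_cancel_right₀ _ hc.ne']
      simp only [sum_const, nsmul_eq_mul, mul_one]
      ring

section CrossEntropy

variable {n : ℕ} {t : Fin n}

theorem DCE_eq_of_eq_off (p : Fin n → ℝ) {q : Fin n → ℝ} {c : ℝ}
    (hq : ∀ i ≠ t, q i = c) :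
    DCE p q = -(p t * Real.log (q t) + (∑ i ∈ univ.erase t, p i) * Real.log c) := by
  rw [DCE, ← sum_erase_add _ _ (mem_univ t), sum_mul,
    sum_congr rfl fun i hi => by rw [hq i (ne_of_mem_erase hi)]]
  ring

theorem DCE_twoPoint {k : Fin n} (hk : k ≠ t) (a b : ℝ) (q : Fin n → ℝ) :
    DCE (fun i => if i = t then a else if i = k then b else 0) q =
      -(a * Real.log (q t) + b * Real.log (q k)) := by
  rw [DCE, Fintype.sum_eq_add t k hk.symm fun i hi => by simp [hi.1, hi.2]]
  simp [hk]

theorem sum_erase_DCE_twoPoint (a b : ℝ) (q : Fin n → ℝ) :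
    ∑ k ∈ univ.erase t, DCE (fun i => if i = t then a else if i = k then b else 0) q =
      -(#(univ.erase t) * (a * Real.log (q t)) +
        b * ∑ k ∈ univ.erase t, Real.log (q k)) := by
  rw [sum_congr rfl fun k hk => DCE_twoPoint (ne_of_mem_erase hk) a b q, sum_neg_distrib,
    sum_add_distrib, sum_const, nsmul_eq_mul, mul_sum]

end CrossEntropy

theorem statement_7_general (n : ℕ) (hn : 2 < n) (t : Fin n)
    (pt qt : ℝ) (hpt : pt ∈ Set.Ioo (0 : ℝ) 1)
    (pvec : Fin n → Fin n → ℝ)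
    (hpvec : pvec = fun k i => if i = t then pt else if i = k then 1 - pt else 0)
    (qstar : Fin n → ℝ)
    (hqstar : qstar = fun i => if i = t then qt else (1 - qt) / ((n : ℝ) - 1)) :
    (∀ q : Fin n → ℝ, (∀ i, q i ∈ Set.Ioo (0 : ℝ) 1) → q t = qt →
        ∑ i ∈ Finset.univ.erase t, q i = 1 - qt →
        (1 / ((n : ℝ) - 1)) * ∑ k ∈ Finset.univ.erase t, DCE (pvec k) q ≥
          (1 / ((n : ℝ) - 1)) * ∑ k ∈ Finset.univ.erase t, DCE (pvec k) qstar) ∧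
    (∀ p : Fin n → ℝ, (∀ i, p i ∈ Set.Icc (0 : ℝ) 1) → p t = pt →
        ∑ i ∈ Finset.univ.erase t, p i = 1 - pt →
        DCE p qstar ≤
          (1 / ((n : ℝ) - 1)) * ∑ k ∈ Finset.univ.erase t, DCE (pvec k) qstar) := by
  subst hpvec hqstar
  set c := (1 - qt) / ((n : ℝ) - 1)
  have hcard : (#(univ.erase t) : ℝ) = n - 1 := by
    rw [card_erase_of_mem (mem_univ t), card_univ, Fintype.card_fin, Nat.cast_pred (by omega)]
  have hn1 : 0 < (n : ℝ) - 1 := by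
    have : (2 : ℝ) < n := by exact_mod_cast hn
    linarith
  have hqstar_off : ∀ i ≠ t, (if i = t then qt else c) = c := fun i hi => if_neg hi
  have hnonempty : (univ.erase t).Nonempty := by
    rw [← card_pos, card_erase_of_mem (mem_univ t), card_univ, Fintype.card_fin]
    omega
  refine ⟨fun q hq hqt hsum => ?_, fun p _ hpt' hsum => ?_⟩
  · have jensen := sum_log_le_card_mul_log_mean hnonempty fun i _ => (hq i).1
    rw [hsum, hcard] at jensen
    have hpt1 : 0 ≤ 1 - pt := by linarith [hpt.2]
    rw [ge_iff_le, sum_erase_DCE_twoPoint, sum_erase_DCE_twoPoint, hqt, if_pos rfl,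
      sum_congr rfl fun i hi => by rw [hqstar_off i (ne_of_mem_erase hi)], sum_const,
      nsmul_eq_mul, hcard]
    gcongr
  · rw [DCE_eq_of_eq_off p hqstar_off, sum_erase_DCE_twoPoint, hpt', hsum, if_pos rfl,
      sum_congr rfl fun i hi => by rw [hqstar_off i (ne_of_mem_erase hi)], sum_const,
      nsmul_eq_mul, hcard]
    exact le_of_eq (by field_simp)

theorem statement_7 (n : ℕ) (hn : 2 < n) (t : Fin n)
    (pt qt : ℝ) (hpt : pt ∈ Set.Ioo (0 : ℝ) 1) (hqt : qt ∈ Set.Ioo (0 : ℝ) 1)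
    (pvec : Fin n → Fin n → ℝ)
    (hpvec : pvec = fun k i => if i = t then pt else if i = k then 1 - pt else 0)
    (qstar : Fin n → ℝ)
    (hqstar : qstar = fun i => if i = t then qt else (1 - qt) / ((n : ℝ) - 1)) :
    (∀ q : Fin n → ℝ, (∀ i, q i ∈ Set.Ioo (0 : ℝ) 1) → q t = qt →
        ∑ i ∈ Finset.univ.erase t, q i = 1 - qt →
        (1 / ((n : ℝ) - 1)) * ∑ k ∈ Finset.univ.erase t, DCE (pvec k) q ≥
          (1 / ((n : ℝ) - 1)) * ∑ k ∈ Finset.univ.erase t, DCE (pvec k) qstar) ∧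
    (∀ p : Fin n → ℝ, (∀ i, p i ∈ Set.Icc (0 : ℝ) 1) → p t = pt →
        ∑ i ∈ Finset.univ.erase t, p i = 1 - pt →
        DCE p qstar ≤
          (1 / ((n : ℝ) - 1)) * ∑ k ∈ Finset.univ.erase t, DCE (pvec k) qstar) :=
  statement_7_general n hn t pt qt hpt pvec hpvec qstar hqstar
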